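/- Row subsampling hrank monotonicity: with the same notation, for ε₂ < ε₁, E[hrank(Ã(ε₂))] ≥ (ε₂/ε₁)·E[hrank(Ã(ε₁))]. -/

import Mathlib

/-- `hrank` of the row-submatrix of `A` with rows in `S`: the number of row indices
`j ∈ S` such that every vector in the left kernel of the submatrix has `j`-th
coordinate zero. -/
noncomputable def hrankSub {k m : ℕ} {F : Type*} [Field F]
    (A : Matrix (Fin k) (Fin m) F) (S : Finset (Fin k)) : ℕ :=
  Nat.card {j : Fin k // j ∈ S ∧
    ∀ (h : j ∈ S) (x : {i // i ∈ S} → F),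
      Matrix.vecMul x (A.submatrix (Subtype.val : {i // i ∈ S} → Fin k) id) = 0 →
        x ⟨j, h⟩ = 0}

/-- Expectation over the random row-subset keeping each of the `k` rows independently
with probability `ε`. -/
noncomputable def rowExp (k : ℕ) (ε : ℝ) (f : Finset (Fin k) → ℝ) : ℝ :=
  ∑ S : Finset (Fin k), ε ^ S.card * (1 - ε) ^ (k - S.card) * f S

/-!
Sampling rows with probability `ε₁ p` is the same as sampling with probability `ε₁` and then
keeping each surviving row independently with probability `p`. A row pinned in `S` stays pinned
in every `T ⊆ S` containing it, because a left-kernel vector of the rows `T` extends by zero to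
one of the rows `S`. So, given the first sample `S`, the second one has expected hrank at least
`p · hrank S`; averaging over `S` gives the claim with `p = ε₂ / ε₁`.
-/

open Finset

namespace Finset

variable {ι R : Type*} [DecidableEq ι] [CommSemiring R]

theorem sum_Icc_pow_mul_pow {s t : Finset ι} (h : t ⊆ s) (a b : R) :
    ∑ u ∈ Icc t s, a ^ (#u - #t) * b ^ (#s - #u) = (a + b) ^ (#s - #t) := by
  have hinj : Set.InjOn (t ∪ ·) ((s \ t).powerset : Set (Finset ι)) := by
    intro v hv w hw hvw
    have hv' : Disjoint t v := disjoint_of_subset_right (mem_powerset.mp hv) disjoint_sdiff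
    have hw' : Disjoint t w := disjoint_of_subset_right (mem_powerset.mp hw) disjoint_sdiff
    rw [← union_sdiff_cancel_left hv', ← union_sdiff_cancel_left hw']
    exact congrArg (· \ t) hvw
  rw [Icc_eq_image_powerset h, sum_image hinj, ← card_sdiff_of_subset h,
    ← sum_pow_mul_eq_add_pow]
  refine sum_congr rfl fun v hv => ?_
  have hvs : v ⊆ s \ t := mem_powerset.mp hv
  have hcard : #(t ∪ v) = #t + #v :=
    card_union_of_disjoint (disjoint_of_subset_right hvs disjoint_sdiff)
  have hv_le : #v ≤ #(s \ t) := card_le_card hvs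
  have hst : #(s \ t) = #s - #t := card_sdiff_of_subset h
  rw [hcard, Nat.add_sub_cancel_left]
  congr 2
  omega

theorem sum_powerset_pow_mul_pow_mul_card_inter {s u : Finset ι} (h : u ⊆ s) (a b : R) :
    ∑ t ∈ s.powerset, a ^ #t * b ^ (#s - #t) * (#(u ∩ t) : R)
      = #u * (a * (a + b) ^ (#s - 1)) := by
  have marginal : ∀ j ∈ s, ∑ t ∈ s.powerset with j ∈ t, a ^ #t * b ^ (#s - #t)
      = a * (a + b) ^ (#s - 1) := by
    intro j hj
    have hIcc : {t ∈ s.powerset | j ∈ t} = Icc {j} s := by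
      ext t; simp [and_comm]
    rw [hIcc, ← card_singleton j, ← sum_Icc_pow_mul_pow (singleton_subset_iff.mpr hj), mul_sum]
    refine sum_congr rfl fun t ht => ?_
    have : 1 ≤ #t := card_pos.mpr ⟨j, singleton_subset_iff.mp (mem_Icc.mp ht).1⟩
    rw [card_singleton, ← mul_assoc, ← pow_succ', Nat.sub_add_cancel this]
  calc ∑ t ∈ s.powerset, a ^ #t * b ^ (#s - #t) * (#(u ∩ t) : R)
      = ∑ j ∈ u, ∑ t ∈ s.powerset with j ∈ t, a ^ #t * b ^ (#s - #t) := by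
        simp_rw [sum_filter]
        rw [sum_comm]
        refine sum_congr rfl fun t _ => ?_
        rw [sum_ite_mem, sum_const, nsmul_eq_mul, mul_comm]
    _ = #u * (a * (a + b) ^ (#s - 1)) := by
        rw [sum_congr rfl fun j hj => marginal j (h hj), sum_const, nsmul_eq_mul]

end Finset

theorem Fintype.sum_pow_mul_pow_mul_sum_powerset {ι R : Type*} [Fintype ι] [DecidableEq ι]
    [CommSemiring R] (a b c d : R) (f : Finset ι → R) :
    ∑ s : Finset ι, a ^ #s * b ^ (Fintype.card ι - #s) *
        ∑ t ∈ s.powerset, c ^ #t * d ^ (#s - #t) * f t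
      = ∑ t : Finset ι, (a * c) ^ #t * (b + a * d) ^ (Fintype.card ι - #t) * f t := by
  simp_rw [mul_sum]
  rw [sum_comm' (t' := univ) (s' := fun t => Icc t univ) (by simp)]
  refine Finset.sum_congr rfl fun t _ => ?_
  rw [← card_univ, add_comm b, ← sum_Icc_pow_mul_pow (subset_univ t), mul_sum, sum_mul]
  refine Finset.sum_congr rfl fun s hs => ?_
  have hts : #t ≤ #s := card_le_card (mem_Icc.mp hs).1
  obtain ⟨n, hn⟩ := Nat.exists_eq_add_of_le hts
  rw [hn, Nat.add_sub_cancel_left, pow_add, mul_pow, mul_pow]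
  ring

theorem rowExp_mul (k : ℕ) (ε p : ℝ) (f : Finset (Fin k) → ℝ) :
    rowExp k (ε * p) f
      = rowExp k ε (fun S => ∑ T ∈ S.powerset, p ^ #T * (1 - p) ^ (#S - #T) * f T) := by
  have h := Fintype.sum_pow_mul_pow_mul_sum_powerset ε (1 - ε) p (1 - p) f
  rw [Fintype.card_fin, show 1 - ε + ε * (1 - p) = 1 - ε * p by ring] at h
  exact h.symm

theorem rowExp_mono {k : ℕ} {ε : ℝ} (h₀ : 0 ≤ ε) (h₁ : ε ≤ 1) {f g : Finset (Fin k) → ℝ}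
    (hfg : ∀ S, f S ≤ g S) : rowExp k ε f ≤ rowExp k ε g := by
  have : 0 ≤ 1 - ε := sub_nonneg.mpr h₁
  unfold rowExp
  gcongr with S
  exact hfg S

theorem mul_rowExp (k : ℕ) (ε c : ℝ) (f : Finset (Fin k) → ℝ) :
    c * rowExp k ε f = rowExp k ε (fun S => c * f S) := by
  simp only [rowExp, mul_sum, mul_left_comm c]

namespace Matrix

variable {ι n F : Type*} [Field F]

def IsPinnedRow (A : Matrix ι n F) (S : Finset ι) (j : ι) : Prop :=
  ∀ (h : j ∈ S) (x : S → F), vecMul x (A.submatrix Subtype.val id) = 0 → x ⟨j, h⟩ = 0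

theorem vecMul_submatrix_val_of_support_subset [Fintype ι] (A : Matrix ι n F) {S : Finset ι}
    {z : ι → F} (hz : ∀ i ∉ S, z i = 0) :
    vecMul (fun i : S => z i) (A.submatrix Subtype.val id) = vecMul z A := by
  ext c
  simp only [vecMul, dotProduct, submatrix_apply, id]
  rw [sum_coe_sort S (fun i => z i * A i c)]
  exact sum_subset (subset_univ S) fun i _ hi => by rw [hz i hi, zero_mul]

theorem IsPinnedRow.anti [Fintype ι] [DecidableEq ι] {A : Matrix ι n F} {S T : Finset ι} {j : ι}
    (hS : A.IsPinnedRow S j) (hTS : T ⊆ S) (hj : j ∈ T) : A.IsPinnedRow T j := by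
  intro _ x hx
  let z : ι → F := fun i => if h : i ∈ T then x ⟨i, h⟩ else 0
  have hzT : ∀ i ∉ T, z i = 0 := fun i hi => dif_neg hi
  have hxz : (fun i : T => z i) = x := funext fun i => dif_pos i.2
  have hzS : vecMul (fun i : S => z i) (A.submatrix Subtype.val id) = 0 := by
    rw [vecMul_submatrix_val_of_support_subset A fun i hi => hzT i fun hiT => hi (hTS hiT),
      ← vecMul_submatrix_val_of_support_subset A hzT, hxz, hx]
  simpa [z, hj] using hS (hTS hj) _ hzS

end Matrix

open Matrix

open scoped Classical in
theorem hrankSub_eq_card_filter {k m : ℕ} {F : Type*} [Field F] (A : Matrix (Fin k) (Fin m) F)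
    (S : Finset (Fin k)) : hrankSub A S = #{j ∈ S | A.IsPinnedRow S j} := by
  rw [hrankSub, Nat.card_eq_fintype_card, Fintype.card_subtype]
  congr 1
  ext j
  rw [mem_filter, mem_filter]
  simp [IsPinnedRow]

theorem mul_hrankSub_le_sum_powerset {k m : ℕ} {F : Type*} [Field F]
    (A : Matrix (Fin k) (Fin m) F) (S : Finset (Fin k)) {p : ℝ} (h₀ : 0 ≤ p) (h₁ : p ≤ 1) :
    p * hrankSub A S
      ≤ ∑ T ∈ S.powerset, p ^ #T * (1 - p) ^ (#S - #T) * (hrankSub A T : ℝ) := by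
  classical
  set P := {j ∈ S | A.IsPinnedRow S j}
  have hP : P ⊆ S := filter_subset _ S
  have hpinned : ∀ T ⊆ S, #(P ∩ T) ≤ hrankSub A T := by
    intro T hTS
    rw [hrankSub_eq_card_filter]
    refine card_le_card fun j hj => ?_
    obtain ⟨hjP, hjT⟩ := mem_inter.mp hj
    exact mem_filter.mpr ⟨hjT, (mem_filter.mp hjP).2.anti hTS hjT⟩
  calc p * hrankSub A S
      = ∑ T ∈ S.powerset, p ^ #T * (1 - p) ^ (#S - #T) * (#(P ∩ T) : ℝ) := by
        rw [sum_powerset_pow_mul_pow_mul_card_inter hP, add_sub_cancel, one_pow, mul_one,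
          hrankSub_eq_card_filter, mul_comm]
    _ ≤ ∑ T ∈ S.powerset, p ^ #T * (1 - p) ^ (#S - #T) * (hrankSub A T : ℝ) := by
        have : 0 ≤ 1 - p := sub_nonneg.mpr h₁
        gcongr with T hT
        exact hpinned T (mem_powerset.mp hT)

theorem row_subsampling_hrank_monotone {k m : ℕ} {F : Type*} [Field F]
    (A : Matrix (Fin k) (Fin m) F) (ε₁ ε₂ : ℝ)
    (h2 : 0 < ε₂) (h21 : ε₂ < ε₁) (h1 : ε₁ ≤ 1) :
    rowExp k ε₂ (fun S => (hrankSub A S : ℝ))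
      ≥ (ε₂ / ε₁) * rowExp k ε₁ (fun S => (hrankSub A S : ℝ)) := by
  have hε₁ : 0 < ε₁ := h2.trans h21
  set p := ε₂ / ε₁
  have hp₀ : 0 ≤ p := by positivity
  have hp₁ : p ≤ 1 := (div_le_one hε₁).mpr h21.le
  have hε₂ : ε₂ = ε₁ * p := (mul_div_cancel₀ ε₂ hε₁.ne').symm
  calc p * rowExp k ε₁ (fun S => (hrankSub A S : ℝ))
      = rowExp k ε₁ (fun S => p * hrankSub A S) := mul_rowExp k ε₁ p _
    _ ≤ rowExp k ε₁ (fun S => ∑ T ∈ S.powerset, p ^ #T * (1 - p) ^ (#S - #T) * hrankSub A T) :=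
        rowExp_mono hε₁.le h1 fun S => mul_hrankSub_le_sum_powerset A S hp₀ hp₁
    _ = rowExp k ε₂ (fun S => (hrankSub A S : ℝ)) := by rw [hε₂, rowExp_mul]
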